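/- Let Δ₁, Δ₂, λ₁, λ₂, κ, ω_m be real numbers, and define the 6×6 real matrix A and 6×2 real matrix B of the quantum optomechanical system (state ordering (q₁, p₁, q₂, p₂, q₃, p₃)) by A = [[0, −Δ₁, 0, 0, 0, 0],[Δ₁, 0, 0, 0, −λ₁, 0],[0, 0, 0, −Δ₂, 0, 0],[0, 0, Δ₂, 0, −λ₂, 0],[0, 0, 0, 0, −κ/2, ω_m],[−λ₁, 0, −λ₂, 0, −ω_m, −κ/2]] and B = [[0,0],[0,0],[0,0],[0,0],[−√κ, 0],[0, −√κ]] (with κ ≥ 0). If Δ₁ = −Δ₂ and λ₁ = λ₂, then the vector c = (λ₁, 0, λ₂, 0, 0, 0)ᵀ satisfies cᵀ·Aᵏ·B = 0 for every integer k ≥ 0; that is, the linear combination λ₁q₁ + λ₂q₂ of the cavity quadratures lies in the orthogonal complement of the controllable subspace and is therefore uncontrollable (while remaining observable from the output, it is a QND variable). -/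
import Mathlib


open Matrix

noncomputable section

/-- Drift matrix of the optomechanical system (state ordering (q₁,p₁,q₂,p₂,q₃,p₃)). -/
def optoA (Δ₁ Δ₂ lam₁ lam₂ κ ωm : ℝ) : Matrix (Fin 6) (Fin 6) ℝ :=
  !![0, -Δ₁, 0, 0, 0, 0;
     Δ₁, 0, 0, 0, -lam₁, 0;
     0, 0, 0, -Δ₂, 0, 0;
     0, 0, Δ₂, 0, -lam₂, 0;
     0, 0, 0, 0, -κ/2, ωm;
     -lam₁, 0, -lam₂, 0, -ωm, -κ/2]

/-- Input matrix of the optomechanical system. -/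
def optoB (κ : ℝ) : Matrix (Fin 6) (Fin 2) ℝ :=
  !![0, 0;
     0, 0;
     0, 0;
     0, 0;
     -Real.sqrt κ, 0;
     0, -Real.sqrt κ]

/-- If Δ₁ = −Δ₂ and λ₁ = λ₂, then c = (λ₁,0,λ₂,0,0,0)ᵀ satisfies cᵀAᵏB = 0
for all k ≥ 0: the linear combination λ₁q₁ + λ₂q₂ is uncontrollable (a QND variable). -/
theorem stmt_19 (Δ₁ Δ₂ lam₁ lam₂ κ ωm : ℝ) (hκ : 0 ≤ κ)
    (hΔ : Δ₁ = -Δ₂) (hlam : lam₁ = lam₂) :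
    ∀ k : ℕ,
      (!![lam₁, 0, lam₂, 0, 0, 0] : Matrix (Fin 1) (Fin 6) ℝ)
        * (optoA Δ₁ Δ₂ lam₁ lam₂ κ ωm) ^ k * optoB κ = 0 := by
  subst hΔ hlam
  intro k
  suffices h : ∃ a b : ℝ,
      (!![lam₁, 0, lam₁, 0, 0, 0] : Matrix (Fin 1) (Fin 6) ℝ)
        * (optoA (-Δ₂) Δ₂ lam₁ lam₁ κ ωm) ^ k = !![a, b, a, -b, 0, 0] by
    obtain ⟨a, b, h⟩ := h
    rw [h]
    ext i j
    fin_cases i <;> fin_cases j <;>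
      simp [optoB, Matrix.mul_apply, Fin.sum_univ_six, show (5:Fin 6) = Fin.succ 4 from rfl, Matrix.cons_val_succ, Matrix.vecHead, Matrix.vecTail]
  induction k with
  | zero =>
    refine ⟨lam₁, 0, ?_⟩
    norm_num
  | succ n ih =>
    obtain ⟨a, b, ih⟩ := ih
    refine ⟨-Δ₂ * b, Δ₂ * a, ?_⟩
    rw [pow_succ, ← Matrix.mul_assoc, ih]
    ext i j
    fin_cases i <;> fin_cases j <;>
      simp [optoA, Matrix.mul_apply, Fin.sum_univ_six, show (5:Fin 6) = Fin.succ 4 from rfl, Matrix.cons_val_succ, Matrix.vecHead, Matrix.vecTail] <;> ring
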